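/- The Lebesgue measure (volume) of the set {(r,s,t) ∈ [0,1]³ : Q(r,s,t) ≤ 1/4} equals (1/4)·(1 + ln 4). -/

import Mathlib

/-!
For fixed `(r, s)` the function `t ↦ Q(r, s, t)` is affine, running from `(1 - r)(1 - s)` at
`t = 0` to `rs` at `t = 1`, and by AM-GM at most one of these two values exceeds `1/4`. Hence the
`t`-section of `{Q > 1/4}` is a single interval of length
`excessLength r s + excessLength (1 - r) (1 - s)`, where
`excessLength r s = (rs - 1/4)⁺ / (r + s - 1)`.
The reflection `(r, s) ↦ (1 - r, 1 - s)` of the unit square shows that both terms have the same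
integral, and on `rs ≥ 1/4` one has `excessLength r s = r - (r - 1/2)² / (r + s - 1)`, so
`∫∫ excessLength = ∫_{1/4}^1 ∫_{1/(4r)}^1 (r - (r - 1/2)² / (r + s - 1)) ds dr = 3/8 - (log 2)/4`.
The volume is therefore `1 - 2 (3/8 - (log 2)/4) = (1 + log 4)/4`.
-/

open MeasureTheory Set Real

lemma MeasureTheory.Measure.prod_prod_apply_eq_lintegral {α β γ : Type*} [MeasurableSpace α]
    [MeasurableSpace β] [MeasurableSpace γ] {μ : Measure α} {ν : Measure β} {ρ : Measure γ}
    [SFinite ν] [SFinite ρ] {S : Set (α × β × γ)} (hS : MeasurableSet S) :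
    μ.prod (ν.prod ρ) S = ∫⁻ q, ρ {c | (q.1, q.2, c) ∈ S} ∂μ.prod ν := by
  rw [← (measurePreserving_prodAssoc μ ν ρ).measure_preimage hS.nullMeasurableSet,
    Measure.prod_apply (hS.preimage MeasurableEquiv.prodAssoc.measurable)]
  rfl

lemma preimage_const_sub_unitSquare :
    (fun q : ℝ × ℝ => (1, 1) - q) ⁻¹' (Icc 0 1 ×ˢ Icc 0 1) = Icc (0:ℝ) 1 ×ˢ Icc (0:ℝ) 1 := by
  ext ⟨r, s⟩
  simp only [mem_preimage, mem_prod, mem_Icc, Prod.fst_sub, Prod.snd_sub]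
  constructor <;> rintro ⟨⟨h1, h2⟩, h3, h4⟩ <;> refine ⟨⟨?_, ?_⟩, ?_, ?_⟩ <;> linarith

lemma setIntegral_unitSquare_comp_one_sub (f : ℝ → ℝ → ℝ) :
    ∫ q in Icc (0:ℝ) 1 ×ˢ Icc (0:ℝ) 1, f (1 - q.1) (1 - q.2) =
      ∫ q in Icc (0:ℝ) 1 ×ˢ Icc (0:ℝ) 1, f q.1 q.2 := by
  have := (Measure.measurePreserving_sub_left volume ((1, 1) : ℝ × ℝ)).setIntegral_preimage_emb
    (MeasurableEquiv.subLeft _).measurableEmbedding (fun q => f q.1 q.2) (Icc 0 1 ×ˢ Icc 0 1)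
  rwa [preimage_const_sub_unitSquare] at this

lemma MeasureTheory.IntegrableOn.comp_one_sub_unitSquare {f : ℝ → ℝ → ℝ}
    (hf : IntegrableOn (fun q : ℝ × ℝ => f q.1 q.2) (Icc (0:ℝ) 1 ×ˢ Icc (0:ℝ) 1)) :
    IntegrableOn (fun q : ℝ × ℝ => f (1 - q.1) (1 - q.2)) (Icc (0:ℝ) 1 ×ˢ Icc (0:ℝ) 1) := by
  have := (Measure.measurePreserving_sub_left volume ((1, 1) : ℝ × ℝ)).integrableOn_comp_preimage
    (MeasurableEquiv.subLeft _).measurableEmbedding (f := fun q : ℝ × ℝ => f q.1 q.2)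
    (s := Icc 0 1 ×ˢ Icc 0 1)
  rw [preimage_const_sub_unitSquare] at this
  exact this.mpr hf

lemma volume_setOf_mul_add_mul_one_sub_le {x y c : ℝ} (h : min x y ≤ c) :
    volume {t ∈ Icc (0:ℝ) 1 | x * t + y * (1 - t) ≤ c} =
      ENNReal.ofReal (1 - max (x - c) 0 / (x - y) - max (y - c) 0 / (y - x)) := by
  rcases lt_or_ge c x with hx | hx
  · have hy : y ≤ c := by simpa [hx.not_ge] using h
    have hxy : 0 < x - y := by linarith
    have hset : {t ∈ Icc (0:ℝ) 1 | x * t + y * (1 - t) ≤ c} = Icc 0 ((c - y) / (x - y)) := by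
      ext t
      simp only [mem_ofPred_eq, mem_Icc, le_div_iff₀ hxy]
      constructor
      · rintro ⟨⟨ht0, -⟩, ht⟩
        exact ⟨ht0, by linarith⟩
      · rintro ⟨ht0, ht⟩
        exact ⟨⟨ht0, by nlinarith⟩, by linarith⟩
    rw [hset, Real.volume_Icc, max_eq_left (by linarith), max_eq_right (by linarith)]
    congr 1
    field_simp
    ring
  rcases lt_or_ge c y with hy | hy
  · have hyx : 0 < y - x := by linarith
    have hset : {t ∈ Icc (0:ℝ) 1 | x * t + y * (1 - t) ≤ c} = Icc ((y - c) / (y - x)) 1 := by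
      ext t
      simp only [mem_ofPred_eq, mem_Icc, div_le_iff₀ hyx]
      constructor
      · rintro ⟨⟨-, ht1⟩, ht⟩
        exact ⟨by linarith, ht1⟩
      · rintro ⟨ht, ht1⟩
        exact ⟨⟨by nlinarith, ht1⟩, by linarith⟩
    rw [hset, Real.volume_Icc, max_eq_right (by linarith), max_eq_left (by linarith)]
    congr 1
    field_simp
    ring
  · have hset : {t ∈ Icc (0:ℝ) 1 | x * t + y * (1 - t) ≤ c} = Icc 0 1 := by
      refine sep_eq_self_iff_mem_true.mpr fun t ht => ?_
      nlinarith [ht.1, ht.2]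
    rw [hset, Real.volume_Icc, max_eq_right (by linarith), max_eq_right (by linarith)]
    norm_num

lemma one_lt_add_of_quarter_lt_mul {r s : ℝ} (hr : 0 ≤ r) (hs : 0 ≤ s) (h : 1 / 4 < r * s) :
    1 < r + s := by
  nlinarith [sq_nonneg (r - s)]

lemma min_mul_mul_one_sub_le_quarter {r s : ℝ} (hr : r ∈ Icc (0:ℝ) 1) (hs : s ∈ Icc (0:ℝ) 1) :
    min (r * s) ((1 - r) * (1 - s)) ≤ 1 / 4 := by
  by_contra! h
  have h1 := one_lt_add_of_quarter_lt_mul hr.1 hs.1 (lt_min_iff.mp h).1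
  have h2 := one_lt_add_of_quarter_lt_mul (sub_nonneg.2 hr.2) (sub_nonneg.2 hs.2)
    (lt_min_iff.mp h).2
  linarith

noncomputable def excessLength (r s : ℝ) : ℝ := max (r * s - 1 / 4) 0 / (r + s - 1)

lemma excessLength_eq_zero_of_mul_le {r s : ℝ} (h : r * s ≤ 1 / 4) : excessLength r s = 0 := by
  rw [excessLength, max_eq_right (by linarith), zero_div]

lemma excessLength_eq_of_le_mul {r s : ℝ} (h : 1 / 4 ≤ r * s) (hrs : r + s - 1 ≠ 0) :
    excessLength r s = r - (r - 1 / 2) ^ 2 / (r + s - 1) := by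
  rw [excessLength, max_eq_left (by linarith)]
  field_simp
  ring

lemma excessLength_nonneg {r s : ℝ} (hr : 0 ≤ r) (hs : 0 ≤ s) : 0 ≤ excessLength r s := by
  rcases le_or_gt (r * s) (1 / 4) with h | h
  · rw [excessLength_eq_zero_of_mul_le h]
  · have := one_lt_add_of_quarter_lt_mul hr hs h
    exact div_nonneg (le_max_right _ _) (by linarith)

lemma excessLength_le_left {r s : ℝ} (hr : 0 ≤ r) (hs : 0 ≤ s) : excessLength r s ≤ r := by
  rcases le_or_gt (r * s) (1 / 4) with h | h
  · rwa [excessLength_eq_zero_of_mul_le h]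
  · have := one_lt_add_of_quarter_lt_mul hr hs h
    rw [excessLength, max_eq_left (by linarith), div_le_iff₀ (by linarith)]
    nlinarith [sq_nonneg (r - 1 / 2)]

lemma measurable_excessLength : Measurable fun q : ℝ × ℝ => excessLength q.1 q.2 := by
  unfold excessLength
  fun_prop

noncomputable def areaRatio (p : ℝ × ℝ × ℝ) : ℝ :=
  p.1 * p.2.1 * p.2.2 + (1 - p.1) * (1 - p.2.1) * (1 - p.2.2)

lemma volume_setOf_areaRatio_mk_le_quarter {r s : ℝ} (hr : r ∈ Icc (0:ℝ) 1)
    (hs : s ∈ Icc (0:ℝ) 1) :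
    volume {t ∈ Icc (0:ℝ) 1 | areaRatio (r, s, t) ≤ 1 / 4} =
      ENNReal.ofReal (1 - excessLength r s - excessLength (1 - r) (1 - s)) := by
  simp only [areaRatio]
  rw [volume_setOf_mul_add_mul_one_sub_le (min_mul_mul_one_sub_le_quarter hr hs), excessLength,
    excessLength, show r * s - (1 - r) * (1 - s) = r + s - 1 by ring,
    show (1 - r) * (1 - s) - r * s = 1 - r + (1 - s) - 1 by ring]

lemma integrableOn_excessLength :
    IntegrableOn (fun q : ℝ × ℝ => excessLength q.1 q.2) (Icc 0 1 ×ˢ Icc 0 1) := by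
  refine Measure.integrableOn_of_bounded (M := 1)
    (isCompact_Icc.prod isCompact_Icc).measure_lt_top.ne
    measurable_excessLength.aestronglyMeasurable ?_
  filter_upwards [ae_restrict_mem (measurableSet_Icc.prod measurableSet_Icc)] with q hq
  rw [Real.norm_of_nonneg (excessLength_nonneg hq.1.1 hq.2.1)]
  exact (excessLength_le_left hq.1.1 hq.2.1).trans hq.1.2

lemma volume_setOf_areaRatio_le_quarter :
    volume {p ∈ Icc (0:ℝ) 1 ×ˢ Icc (0:ℝ) 1 ×ˢ Icc (0:ℝ) 1 | areaRatio p ≤ 1 / 4} =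
      ENNReal.ofReal (∫ q in Icc (0:ℝ) 1 ×ˢ Icc (0:ℝ) 1,
        (1 - excessLength q.1 q.2 - excessLength (1 - q.1) (1 - q.2))) := by
  have hS :
      MeasurableSet {p ∈ Icc (0:ℝ) 1 ×ˢ Icc (0:ℝ) 1 ×ˢ Icc (0:ℝ) 1 | areaRatio p ≤ 1 / 4} :=
    (measurableSet_Icc.prod (measurableSet_Icc.prod measurableSet_Icc)).inter
      (measurableSet_le (f := areaRatio) (by unfold areaRatio; fun_prop) measurable_const)
  have hslice (q : ℝ × ℝ) :
      volume {t | (q.1, q.2, t) ∈ {p ∈ Icc (0:ℝ) 1 ×ˢ Icc (0:ℝ) 1 ×ˢ Icc (0:ℝ) 1 |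
        areaRatio p ≤ 1 / 4}} = (Icc 0 1 ×ˢ Icc 0 1).indicator (fun q =>
          ENNReal.ofReal (1 - excessLength q.1 q.2 - excessLength (1 - q.1) (1 - q.2))) q := by
    by_cases hq : q ∈ Icc (0:ℝ) 1 ×ˢ Icc (0:ℝ) 1
    · rw [indicator_of_mem hq, ← volume_setOf_areaRatio_mk_le_quarter hq.1 hq.2]
      have ⟨⟨hr0, hr1⟩, hs0, hs1⟩ := hq
      congr 1
      ext t
      simp [hr0, hr1, hs0, hs1]
    · rw [indicator_of_notMem hq]
      convert measure_empty (μ := volume)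
      ext t
      simp only [mem_prod, mem_ofPred_eq, mem_empty_iff_false, iff_false, not_and]
      exact fun h => absurd ⟨h.1, h.2.1⟩ hq
  have hint : IntegrableOn
      (fun q : ℝ × ℝ => 1 - excessLength q.1 q.2 - excessLength (1 - q.1) (1 - q.2))
      (Icc 0 1 ×ˢ Icc 0 1) := ((integrableOn_const (C := (1:ℝ))
    (isCompact_Icc.prod isCompact_Icc).measure_lt_top.ne).sub
    integrableOn_excessLength).sub integrableOn_excessLength.comp_one_sub_unitSquare
  rw [Measure.volume_eq_prod, Measure.volume_eq_prod ℝ ℝ,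
    Measure.prod_prod_apply_eq_lintegral hS, ← Measure.volume_eq_prod, lintegral_congr hslice,
    lintegral_indicator (measurableSet_Icc.prod measurableSet_Icc),
    ← ofReal_integral_eq_lintegral_ofReal hint]
  filter_upwards [ae_restrict_mem (measurableSet_Icc.prod measurableSet_Icc)] with q hq
  have h1 := excessLength_le_left hq.1.1 hq.2.1
  have h2 := excessLength_le_left (sub_nonneg.2 hq.1.2) (sub_nonneg.2 hq.2.2)
  simp only [Pi.zero_apply]
  linarith

-- For `r < 1/2`, `log (2 * r - 1)` is `log |2 * r - 1|`: this is what the integral over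
-- `r ∈ (1/4, 1/2)` needs.
noncomputable def excessArea (r : ℝ) : ℝ :=
  r - 1 / 4 - 2 * (r - 1 / 2) ^ 2 * (log (2 * r) - log (2 * r - 1))

lemma integral_excessLength_right {r : ℝ} (hr : 1 / 4 < r) (hr' : r ≠ 1 / 2) :
    ∫ s in Icc (0:ℝ) 1, excessLength r s = excessArea r := by
  have hr0 : 0 < r := by linarith
  set a := (4 * r)⁻¹ with ha
  have ha0 : 0 < a := by positivity
  have ha1 : a ≤ 1 := inv_le_one_of_one_le₀ (by linarith)
  have hra : r * a = 1 / 4 := by rw [ha]; field_simp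
  have hden : a + (r - 1) = (2 * r - 1) ^ 2 / (4 * r) := by rw [ha]; field_simp; ring
  have h2r : 2 * r - 1 ≠ 0 := fun h => hr' (by linarith)
  have hden0 : 0 < a + (r - 1) := by
    rw [hden]
    positivity
  have hvanish : ∀ s ∈ Icc 0 1 \ Icc a 1, excessLength r s = 0 := by
    rintro s ⟨⟨hs0, hs1⟩, hs⟩
    have hsa : s < a := by by_contra! h; exact hs ⟨h, hs1⟩
    exact excessLength_eq_zero_of_mul_le (by nlinarith)
  have hformula : EqOn (excessLength r) (fun s => r - (r - 1 / 2) ^ 2 * (s + (r - 1))⁻¹)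
      (uIcc a 1) := by
    intro s hs
    rw [uIcc_of_le ha1] at hs
    rw [excessLength_eq_of_le_mul (by nlinarith [hs.1]) (by linarith [hs.1]),
      show r + s - 1 = s + (r - 1) by ring, div_eq_mul_inv]
  have hint : IntervalIntegrable (fun s => (r - 1 / 2) ^ 2 * (s + (r - 1))⁻¹) volume a 1 := by
    refine ContinuousOn.intervalIntegrable
      (continuousOn_const.mul (ContinuousOn.inv₀ (by fun_prop) ?_))
    intro s hs
    rw [uIcc_of_le ha1] at hs
    linarith [hs.1]
  rw [setIntegral_eq_of_subset_of_forall_sdiff_eq_zero measurableSet_Icc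
      (Icc_subset_Icc ha0.le le_rfl) hvanish,
    integral_Icc_eq_integral_Ioc, ← intervalIntegral.integral_of_le ha1,
    intervalIntegral.integral_congr hformula,
    intervalIntegral.integral_sub intervalIntegrable_const hint, intervalIntegral.integral_const,
    intervalIntegral.integral_const_mul, intervalIntegral.integral_comp_add_right (fun x => x⁻¹),
    integral_inv_of_pos hden0 (by linarith), hden,
    show 1 + (r - 1) = r by ring,
    show r / ((2 * r - 1) ^ 2 / (4 * r)) = (2 * r) ^ 2 / (2 * r - 1) ^ 2 by field_simp; ring,
    log_div (by positivity) (by positivity), log_pow, log_pow, excessArea, smul_eq_mul, ha]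
  field_simp
  ring

noncomputable def powMulLogPrimitive (n : ℕ) (x : ℝ) : ℝ :=
  x ^ (n + 1) * log x / (n + 1) - x ^ (n + 1) / (n + 1) ^ 2

lemma hasDerivAt_powMulLogPrimitive (n : ℕ) {x : ℝ} (hx : x ≠ 0) :
    HasDerivAt (powMulLogPrimitive n) (x ^ n * log x) x := by
  refine ((((hasDerivAt_pow (n + 1) x).mul (hasDerivAt_log hx)).div_const (n + 1)).sub
    ((hasDerivAt_pow (n + 1) x).div_const ((n + 1) ^ 2))).congr_deriv ?_
  rw [Nat.add_sub_cancel, pow_succ]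
  push_cast
  field_simp
  ring

@[fun_prop]
lemma continuous_powMulLogPrimitive (n : ℕ) : Continuous (powMulLogPrimitive n) := by
  have h : powMulLogPrimitive n =
      fun x => x ^ n * (x * log x) / (n + 1) - x ^ (n + 1) / (n + 1) ^ 2 := by
    ext x; simp only [powMulLogPrimitive]; ring
  rw [h]
  have := continuous_mul_log
  fun_prop

-- `2 (r - 1/2)² = ((2r)² - 2 (2r) + 1) / 2 = (2r - 1)² / 2`
noncomputable def excessAreaPrimitive (r : ℝ) : ℝ :=
  r ^ 2 / 2 - r / 4
    - (powMulLogPrimitive 2 (2 * r) - 2 * powMulLogPrimitive 1 (2 * r)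
      + powMulLogPrimitive 0 (2 * r)) / 4
    + powMulLogPrimitive 2 (2 * r - 1) / 4

lemma hasDerivAt_excessAreaPrimitive {r : ℝ} (hr : r ≠ 0) (hr' : 2 * r - 1 ≠ 0) :
    HasDerivAt excessAreaPrimitive (excessArea r) r := by
  have h2r : HasDerivAt (fun y : ℝ => 2 * y) 2 r := by simpa using (hasDerivAt_id r).const_mul 2
  have h2r1 : HasDerivAt (fun y : ℝ => 2 * y - 1) 2 r := h2r.sub_const 1
  have hP (n : ℕ) := (hasDerivAt_powMulLogPrimitive n (mul_ne_zero two_ne_zero hr)).comp r h2r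
  have hQ := (hasDerivAt_powMulLogPrimitive 2 hr').comp r h2r1
  refine (((((hasDerivAt_pow 2 r).div_const 2).sub ((hasDerivAt_id r).div_const 4)).sub
    ((((hP 2).sub ((hP 1).const_mul 2)).add (hP 0)).div_const 4)).add
    (hQ.div_const 4)).congr_deriv ?_
  simp only [excessArea]
  ring

lemma integral_excessArea : ∫ r in (1 / 4 : ℝ)..1, excessArea r = 3 / 8 - log 2 / 4 := by
  have hcont : Continuous excessAreaPrimitive := by
    unfold excessAreaPrimitive
    fun_prop
  have hint : IntervalIntegrable excessArea volume (1 / 4) 1 := by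
    have h : excessArea = fun r => r - 1 / 4 - 2 * (r - 1 / 2) ^ 2 * log (2 * r)
        + (2 * r - 1) * ((2 * r - 1) * log (2 * r - 1)) / 2 := by
      ext r; simp only [excessArea]; ring
    rw [h]
    apply ContinuousOn.intervalIntegrable
    have := continuous_mul_log
    fun_prop (disch := intro r hr; rw [uIcc_of_le (by norm_num)] at hr; linarith [hr.1])
  rw [integral_eq_of_hasDerivAt_off_countable_of_le _ _ (by norm_num)
    (countable_singleton (1 / 2)) hcont.continuousOn
    (fun r ⟨⟨h1, _⟩, h2⟩ => hasDerivAt_excessAreaPrimitive (by linarith)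
      (fun h => h2 (by simp; linarith))) hint]
  norm_num [excessAreaPrimitive, powMulLogPrimitive, log_inv, log_neg_eq_log]
  rw [show log (1 / 2 : ℝ) = -log 2 by rw [one_div, log_inv]]
  ring

lemma integral_excessLength :
    ∫ q in Icc (0:ℝ) 1 ×ˢ Icc (0:ℝ) 1, excessLength q.1 q.2 = 3 / 8 - log 2 / 4 := by
  have hsub : Ioc (1 / 4 : ℝ) 1 ×ˢ Icc (0:ℝ) 1 ⊆ Icc 0 1 ×ˢ Icc 0 1 :=
    prod_mono (Ioc_subset_Icc_self.trans (Icc_subset_Icc (by norm_num) le_rfl)) subset_rfl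
  have hvanish : ∀ q ∈ Icc (0:ℝ) 1 ×ˢ Icc (0:ℝ) 1 \ Ioc (1 / 4) 1 ×ˢ Icc 0 1,
      excessLength q.1 q.2 = 0 := by
    rintro ⟨r, s⟩ ⟨⟨⟨hr0, hr1⟩, hs0, hs1⟩, hq⟩
    have hr : r ≤ 1 / 4 := by by_contra! h; exact hq ⟨⟨h, hr1⟩, hs0, hs1⟩
    exact excessLength_eq_zero_of_mul_le (by nlinarith)
  have hae : ∀ᵐ r : ℝ, r ≠ 1 / 2 := by simp [ae_iff, measure_singleton]
  rw [setIntegral_eq_of_subset_of_forall_sdiff_eq_zero (measurableSet_Icc.prod measurableSet_Icc)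
      hsub hvanish, Measure.volume_eq_prod,
    setIntegral_prod _ (integrableOn_excessLength.mono_set hsub), ← integral_excessArea,
    intervalIntegral.integral_of_le (by norm_num)]
  refine setIntegral_congr_ae measurableSet_Ioc ?_
  filter_upwards [hae] with r hr hmem
  exact integral_excessLength_right hmem.1 hr

/-- The volume of `{(r,s,t) ∈ [0,1]³ : r·s·t + (1−r)·(1−s)·(1−t) ≤ 1/4}`
equals `(1/4)·(1 + ln 4)`. -/
theorem cdf_at_quarter :
    (volume {p : ℝ × ℝ × ℝ | p ∈ Set.Icc (0:ℝ) 1 ×ˢ Set.Icc (0:ℝ) 1 ×ˢ Set.Icc (0:ℝ) 1 ∧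
        p.1 * p.2.1 * p.2.2 + (1 - p.1) * (1 - p.2.1) * (1 - p.2.2) ≤ 1 / 4}).toReal =
      (1 / 4) * (1 + Real.log 4) := by
  have hsquare : volume (Icc (0:ℝ) 1 ×ˢ Icc (0:ℝ) 1) = 1 := by
    rw [Measure.volume_eq_prod, Measure.prod_prod, Real.volume_Icc]
    norm_num
  have hone : IntegrableOn (fun _ => (1 : ℝ)) (Icc (0:ℝ) 1 ×ˢ Icc (0:ℝ) 1) :=
    integrableOn_const (by rw [hsquare]; exact ENNReal.one_ne_top)
  have hintegral : ∫ q in Icc (0:ℝ) 1 ×ˢ Icc (0:ℝ) 1,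
      (1 - excessLength q.1 q.2 - excessLength (1 - q.1) (1 - q.2)) = 1 / 4 * (1 + log 4) := by
    have hsub : IntegrableOn (fun q : ℝ × ℝ => 1 - excessLength q.1 q.2)
        (Icc (0:ℝ) 1 ×ˢ Icc (0:ℝ) 1) := hone.sub integrableOn_excessLength
    rw [integral_sub hsub integrableOn_excessLength.comp_one_sub_unitSquare,
      integral_sub hone integrableOn_excessLength, setIntegral_const, measureReal_def, hsquare,
      setIntegral_unitSquare_comp_one_sub excessLength, integral_excessLength,
      show (4 : ℝ) = 2 ^ 2 by norm_num, log_pow]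
    norm_num
    ring
  have hvolume := volume_setOf_areaRatio_le_quarter
  rw [hintegral] at hvolume
  exact (congrArg ENNReal.toReal hvolume).trans (ENNReal.toReal_ofReal (by positivity))
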